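/- Let R be a skew-invertible R-matrix on V⊗V, V = ℂ^N, satisfying the Hecke condition with parameter q, with C := Tr₍₂₎(Ψ). Let A be an associative unital ℂ-algebra and let L, M ∈ Mat_N(A) satisfy the relations of the adjoint braided differential algebra: R₁M₁R₁M₁ = M₁R₁M₁R₁, R₁L₁R₁L₁ = L₁R₁L₁R₁, and R₁L₁R₁M₁ = M₁R₁L₁R₁. Then for every k ≥ 1 the R-trace Tr_R(M^k) = Tr(C·M^k) ∈ A commutes with every entry of M and with every entry of L; i.e., Tr_R(M^k) is central in the subalgebra of A generated by the entries of L and M. -/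

import Mathlib

/-!
Write `S` for `R` acting on `A`-valued matrices, `S⁻¹ = S - (q - q⁻¹)` for its inverse given by
the Hecke condition, `C₂ = I ⊗ C`, and `Tr₂` for the partial trace over the second factor. The
defining relations give `S⁻¹ M₁ᵏ S Y₁ = Y₁ S M₁ᵏ S⁻¹` for `Y = L, M`. Skew-invertibility gives
`Tr₂(C₂ S) = I` and makes the realignment of `R` invertible; contracting the Yang–Baxter equation
against `C` in the third factor and cancelling the realignment then yields
`Tr₂(C₂ S X₁ S) = Tr_R(X) I + (q - q⁻¹) X`, hence `Tr₂(C₂ S⁻¹ X₁ S) = Tr₂(C₂ S X₁ S⁻¹) = Tr_R(X) I`.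
Applying `Tr₂(C₂ ·)` to the relation, with `C₂` commuting with `X₁`, gives
`Tr_R(Mᵏ) Y = Y Tr_R(Mᵏ)`.
-/

open Matrix BigOperators

/-- `X₁ = X ⊗ id` acting on the factors 1,2 of `(ℂ^N)^{⊗3}`. -/
noncomputable def up12 {N : ℕ} (X : Matrix (Fin N × Fin N) (Fin N × Fin N) ℂ) :
    Matrix (Fin N × Fin N × Fin N) (Fin N × Fin N × Fin N) ℂ :=
  Matrix.of fun p q => X (p.1, p.2.1) (q.1, q.2.1) * (if p.2.2 = q.2.2 then 1 else 0)

/-- `X₂ = id ⊗ X` acting on the factors 2,3 of `(ℂ^N)^{⊗3}`. -/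
noncomputable def up23 {N : ℕ} (X : Matrix (Fin N × Fin N) (Fin N × Fin N) ℂ) :
    Matrix (Fin N × Fin N × Fin N) (Fin N × Fin N × Fin N) ℂ :=
  Matrix.of fun p q => (if p.1 = q.1 then 1 else 0) * X (p.2.1, p.2.2) (q.2.1, q.2.2)

/-- The partial trace over the middle factor of `V^{⊗3}`. -/
noncomputable def ptrMid {N : ℕ}
    (Y : Matrix (Fin N × Fin N × Fin N) (Fin N × Fin N × Fin N) ℂ) :
    Matrix (Fin N × Fin N) (Fin N × Fin N) ℂ :=
  Matrix.of fun a d => ∑ b : Fin N, Y (a.1, b, a.2) (d.1, b, d.2)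

/-- The flip `P₁₃` on factors 1 and 3. -/
noncomputable def flip13 (N : ℕ) : Matrix (Fin N × Fin N) (Fin N × Fin N) ℂ :=
  Matrix.of fun p q => if p.1 = q.2 ∧ p.2 = q.1 then 1 else 0

/-- `C = Tr₍₂₎(Ψ)`. -/
noncomputable def Cmat {N : ℕ} (Ψ : Matrix (Fin N × Fin N) (Fin N × Fin N) ℂ) :
    Matrix (Fin N) (Fin N) ℂ :=
  Matrix.of fun i j => ∑ b : Fin N, Ψ (i, b) (j, b)

/-- `X₁ = X ⊗ I_N` for a matrix with entries in an algebra `A`. -/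
def lift1 {N : ℕ} {A : Type} [Ring A] (X : Matrix (Fin N) (Fin N) A) :
    Matrix (Fin N × Fin N) (Fin N × Fin N) A :=
  Matrix.of fun p q => X p.1 q.1 * (if p.2 = q.2 then 1 else 0)

/-- The `R`-trace `Tr_R(X) = Tr(C·X)` of an `A`-valued matrix. -/
def trR {N : ℕ} {A : Type} [Ring A] [Algebra ℂ A] (C : Matrix (Fin N) (Fin N) ℂ)
    (X : Matrix (Fin N) (Fin N) A) : A :=
  ∑ i : Fin N, ∑ j : Fin N, algebraMap ℂ A (C i j) * X j i

open Kronecker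

section PartialTrace

variable {m m' n α : Type*} [Fintype n]

def ptraceRight [AddCommMonoid α] (Z : Matrix (m × n) (m' × n) α) : Matrix m m' α :=
  of fun i j => ∑ b, Z (i, b) (j, b)

def realign (X : Matrix (m × n) (m' × n) α) : Matrix (m × m') (n × n) α :=
  of fun p r => X (p.1, r.1) (p.2, r.2)

/-- `ptraceKernel G H (k, l) (i, j)` is the coefficient of `X k l` in `ptraceRight (G * X₁ * H) i j`
(see `ptraceRight_map_mul_lift1_mul_map_apply`). -/
def ptraceKernel [NonUnitalNonAssocSemiring α] (G H : Matrix (m × n) (m × n) α) :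
    Matrix (m × m) (m × m) α :=
  of fun p r => ∑ b, ∑ c, G (r.1, b) (p.1, c) * H (p.2, c) (r.2, b)

theorem ptraceRight_sub [AddCommGroup α] (Z W : Matrix (m × n) (m' × n) α) :
    ptraceRight (Z - W) = ptraceRight Z - ptraceRight W := by
  ext
  simp [ptraceRight, Finset.sum_sub_distrib]

theorem ptraceRight_smul {R : Type*} [Monoid R] [AddCommMonoid α] [DistribMulAction R α] (c : R)
    (Z : Matrix (m × n) (m' × n) α) : ptraceRight (c • Z) = c • ptraceRight Z := by
  ext
  simp [ptraceRight, Finset.smul_sum]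

theorem ptraceRight_map {β F : Type*} [AddCommMonoid α] [AddCommMonoid β] [FunLike F α β]
    [AddMonoidHomClass F α β] (f : F) (Z : Matrix (m × n) (m' × n) α) :
    ptraceRight (Z.map f) = (ptraceRight Z).map f := by
  ext
  simp [ptraceRight]

end PartialTrace

section Hecke

variable {𝕜 B : Type*} [Field 𝕜] [Ring B] [Algebra 𝕜 B] {q : 𝕜} {x : B}

theorem mul_self_eq_of_hecke (hq : q ≠ 0) (h : (x - q • 1) * (x + q⁻¹ • 1) = 0) :
    x * x = (q - q⁻¹) • x + 1 := by
  have hexp : (x - q • 1) * (x + q⁻¹ • 1) = x * x - ((q - q⁻¹) • x + (q * q⁻¹) • 1) := by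
    simp only [sub_mul, mul_add, smul_mul_assoc, mul_smul_comm, mul_one, one_mul]
    module
  rwa [hexp, mul_inv_cancel₀ hq, one_smul, sub_eq_zero] at h

theorem mul_sub_eq_one_of_hecke (hq : q ≠ 0) (h : (x - q • 1) * (x + q⁻¹ • 1) = 0) :
    x * (x - (q - q⁻¹) • 1) = 1 := by
  rw [mul_sub, mul_smul_comm, mul_one, mul_self_eq_of_hecke hq h, add_sub_cancel_left]

theorem sub_mul_eq_one_of_hecke (hq : q ≠ 0) (h : (x - q • 1) * (x + q⁻¹ • 1) = 0) :
    (x - (q - q⁻¹) • 1) * x = 1 := by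
  rw [sub_mul, smul_mul_assoc, one_mul, mul_self_eq_of_hecke hq h, add_sub_cancel_left]

end Hecke

theorem conj_pow_mul_eq_of_reflection {M : Type*} [Monoid M] {s t x y : M} (hst : s * t = 1)
    (hts : t * s = 1) (h : s * y * s * x = x * s * y * s) (n : ℕ) :
    t * x ^ n * s * y = y * s * x ^ n * t := by
  let u : Mˣ := ⟨s, t, hst, hts⟩
  have base : SemiconjBy y (s * x * t) (t * x * s) :=
    calc y * (s * x * t) = t * (s * y * s * x) * t := by simp only [← mul_assoc, hts, one_mul]
      _ = t * (x * s * y * s) * t := by rw [h]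
      _ = t * x * s * y := by simp only [mul_assoc, hst, mul_one]
  have hconj : (t * x * s) ^ n = t * x ^ n * s := u.conj_pow' x n
  have hconj' : (s * x * t) ^ n = s * x ^ n * t := u.conj_pow x n
  calc t * x ^ n * s * y = (t * x * s) ^ n * y := by rw [hconj]
    _ = y * (s * x * t) ^ n := (base.pow_right n).eq.symm
    _ = y * s * x ^ n * t := by rw [hconj']; simp only [mul_assoc]

section Scalar

variable {N : ℕ} {R Ψ : Matrix (Fin N × Fin N) (Fin N × Fin N) ℂ} {q : ℂ}

theorem ptrMid_up12_mul_up23_apply (X Y : Matrix (Fin N × Fin N) (Fin N × Fin N) ℂ)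
    (a c d f : Fin N) :
    ptrMid (up12 X * up23 Y) (a, c) (d, f) = ∑ b, ∑ y, X (a, b) (d, y) * Y (y, c) (b, f) := by
  simp [ptrMid, mul_apply, Fintype.sum_prod_type, up12, up23, mul_comm]

theorem sum_mul_eq_of_skew (hskew : ptrMid (up12 R * up23 Ψ) = flip13 N) (a c d f : Fin N) :
    ∑ b, ∑ y, R (a, b) (d, y) * Ψ (y, c) (b, f) = if a = f ∧ c = d then 1 else 0 := by
  rw [← ptrMid_up12_mul_up23_apply, hskew]
  rfl

theorem isUnit_realign_of_skew (hskew : ptrMid (up12 R * up23 Ψ) = flip13 N) :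
    IsUnit (realign R) := by
  have hinv : realign R * of (fun p r => Ψ (p.2, r.2) (p.1, r.1)) = 1 := by
    ext ⟨a, d⟩ ⟨f, c⟩
    simp only [realign, mul_apply, Fintype.sum_prod_type, of_apply, sum_mul_eq_of_skew hskew,
      one_apply, Prod.mk.injEq]
    grind
  exact ⟨⟨_, _, hinv, mul_eq_one_comm.mp hinv⟩, rfl⟩

theorem sum_Cmat_mul_eq_of_skew (hskew : ptrMid (up12 R * up23 Ψ) = flip13 N) (a d : Fin N) :
    ∑ c, ∑ f, Cmat Ψ c f * R (a, f) (d, c) = if a = d then 1 else 0 := by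
  calc ∑ c, ∑ f, Cmat Ψ c f * R (a, f) (d, c)
      = ∑ b, ∑ f, ∑ c, R (a, f) (d, c) * Ψ (c, b) (f, b) := by
        simp only [Cmat, of_apply, Finset.sum_mul]
        conv_lhs => enter [2, c]; rw [Finset.sum_comm]
        rw [Finset.sum_comm]
        conv_lhs => enter [2, b]; rw [Finset.sum_comm]
        simp only [mul_comm]
    _ = if a = d then 1 else 0 := by
        simp [sum_mul_eq_of_skew hskew, ite_and, Finset.sum_ite_eq]

theorem ptraceRight_one_kronecker_mul_of_skew (hskew : ptrMid (up12 R * up23 Ψ) = flip13 N) :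
    ptraceRight ((1 ⊗ₖ Cmat Ψ) * R) = 1 := by
  ext a d
  simpa [ptraceRight, mul_apply, Fintype.sum_prod_type, one_apply] using
    sum_Cmat_mul_eq_of_skew hskew a d

theorem realign_mul_ptraceKernel_of_yangBaxter
    (hYB : up12 R * up23 R * up12 R = up23 R * up12 R * up23 R)
    (hskew : ptrMid (up12 R * up23 Ψ) = flip13 N) :
    realign R * ptraceKernel ((1 ⊗ₖ Cmat Ψ) * R) R = realign (R * R) := by
  ext ⟨a, d⟩ ⟨b, e⟩
  calc (realign R * ptraceKernel ((1 ⊗ₖ Cmat Ψ) * R) R) (a, d) (b, e)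
      = ∑ c, ∑ f, Cmat Ψ c f * (up23 R * up12 R * up23 R) (a, b, f) (d, e, c) := by
        simp [realign, ptraceKernel, mul_apply, Fintype.sum_prod_type, one_apply, up12, up23,
          Finset.sum_mul, Finset.mul_sum]
        conv_lhs => enter [2, m]; rw [Finset.sum_comm]
        rw [Finset.sum_comm]
        conv_lhs => enter [2, c, 2, m, 2, y]; rw [Finset.sum_comm]
        conv_lhs => enter [2, c, 2, m]; rw [Finset.sum_comm]
        conv_lhs => enter [2, c]; rw [Finset.sum_comm]
        conv_lhs => enter [2, c, 2, f]; rw [Finset.sum_comm]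
        conv_lhs => enter [2, c, 2, f, 2, y]; rw [Finset.sum_comm]
        simp only [mul_comm, mul_left_comm]
    _ = ∑ c, ∑ f, Cmat Ψ c f * (up12 R * up23 R * up12 R) (a, b, f) (d, e, c) := by rw [hYB]
    _ = ∑ x, ∑ y, ∑ m,
          R (a, b) (x, m) * (∑ c, ∑ f, Cmat Ψ c f * R (m, f) (y, c)) * R (x, y) (d, e) := by
        simp [mul_apply, Fintype.sum_prod_type, up12, up23, Finset.sum_mul, Finset.mul_sum]
        rw [Finset.sum_comm]
        conv_lhs => enter [2, f]; rw [Finset.sum_comm]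
        conv_lhs => enter [2, f, 2, x]; rw [Finset.sum_comm]
        conv_lhs => enter [2, f, 2, x, 2, y]; rw [Finset.sum_comm]
        rw [Finset.sum_comm]
        conv_lhs => enter [2, x]; rw [Finset.sum_comm]
        conv_lhs => enter [2, x, 2, y]; rw [Finset.sum_comm]
        conv_lhs => enter [2, x, 2, y, 2, m]; rw [Finset.sum_comm]
        simp only [mul_comm, mul_left_comm]
    _ = realign (R * R) (a, d) (b, e) := by
        simp [sum_Cmat_mul_eq_of_skew hskew, realign, mul_apply, Fintype.sum_prod_type]

theorem ptraceKernel_eq_of_hecke (hq : q ≠ 0)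
    (hYB : up12 R * up23 R * up12 R = up23 R * up12 R * up23 R)
    (hHecke : (R - q • (1 : Matrix (Fin N × Fin N) (Fin N × Fin N) ℂ))
        * (R + q⁻¹ • (1 : Matrix (Fin N × Fin N) (Fin N × Fin N) ℂ)) = 0)
    (hskew : ptrMid (up12 R * up23 Ψ) = flip13 N) :
    ptraceKernel ((1 ⊗ₖ Cmat Ψ) * R) R
      = (q - q⁻¹) • 1 + of fun p r => if r.1 = r.2 then Cmat Ψ p.2 p.1 else 0 := by
  refine (isUnit_realign_of_skew hskew).mul_left_cancel ?_
  have hQ : realign R * (of fun p r => if r.1 = r.2 then Cmat Ψ p.2 p.1 else 0) = realign 1 := by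
    ext ⟨a, d⟩ ⟨b, e⟩
    by_cases hbe : b = e
    · simp only [hbe, realign, mul_apply, Fintype.sum_prod_type, one_apply, of_apply, if_true,
        Prod.mk.injEq, and_true]
      rw [← sum_Cmat_mul_eq_of_skew hskew a d, Finset.sum_comm]
      simp only [mul_comm]
    · simp [hbe, realign, mul_apply, one_apply]
  rw [realign_mul_ptraceKernel_of_yangBaxter hYB hskew, mul_self_eq_of_hecke hq hHecke,
    Matrix.mul_add, hQ, Matrix.mul_smul, mul_one]
  rfl

end Scalar

section AlgebraValued

variable {N : ℕ} {A : Type} [Ring A]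

theorem lift1_mul (X Y : Matrix (Fin N) (Fin N) A) : lift1 (X * Y) = lift1 X * lift1 Y := by
  ext ⟨i, b⟩ ⟨j, c⟩
  simp [lift1, mul_apply, Fintype.sum_prod_type]

theorem lift1_one : lift1 (1 : Matrix (Fin N) (Fin N) A) = 1 := by
  ext ⟨i, b⟩ ⟨j, c⟩
  by_cases h : i = j <;> simp [lift1, one_apply, h]

theorem lift1_pow (X : Matrix (Fin N) (Fin N) A) (k : ℕ) : lift1 (X ^ k) = lift1 X ^ k := by
  induction k with
  | zero => simp [lift1_one]
  | succ k ih => rw [pow_succ, pow_succ, lift1_mul, ih]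

theorem ptraceRight_mul_lift1 (Z : Matrix (Fin N × Fin N) (Fin N × Fin N) A)
    (X : Matrix (Fin N) (Fin N) A) :
    ptraceRight (Z * lift1 X) = ptraceRight Z * X := by
  ext i j
  simp [ptraceRight, lift1, mul_apply, Fintype.sum_prod_type, Finset.sum_mul]
  exact Finset.sum_comm

theorem ptraceRight_lift1_mul (Z : Matrix (Fin N × Fin N) (Fin N × Fin N) A)
    (X : Matrix (Fin N) (Fin N) A) :
    ptraceRight (lift1 X * Z) = X * ptraceRight Z := by
  ext i j
  simp [ptraceRight, lift1, mul_apply, Fintype.sum_prod_type, Finset.mul_sum]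
  exact Finset.sum_comm

variable [Algebra ℂ A] {R Ψ : Matrix (Fin N × Fin N) (Fin N × Fin N) ℂ} {q : ℂ}

theorem commute_lift1_map_one_kronecker (X : Matrix (Fin N) (Fin N) A)
    (C : Matrix (Fin N) (Fin N) ℂ) :
    Commute (lift1 X) ((1 ⊗ₖ C).map (algebraMap ℂ A)) := by
  ext ⟨i, b⟩ ⟨j, c⟩
  simp [lift1, mul_apply, Fintype.sum_prod_type, one_apply, Algebra.commutes, apply_ite]

theorem ptraceRight_map_mul_lift1_mul_map_apply (G H : Matrix (Fin N × Fin N) (Fin N × Fin N) ℂ)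
    (X : Matrix (Fin N) (Fin N) A) (i j : Fin N) :
    ptraceRight (G.map (algebraMap ℂ A) * lift1 X * H.map (algebraMap ℂ A)) i j =
      ∑ k, ∑ l, algebraMap ℂ A (ptraceKernel G H (k, l) (i, j)) * X k l := by
  simp [ptraceRight, ptraceKernel, lift1, mul_apply, Fintype.sum_prod_type, Finset.sum_mul,
    mul_assoc, ← Algebra.commutes _ (X _ _)]
  rw [Finset.sum_comm]
  conv_lhs => enter [2, l, 2, b]; rw [Finset.sum_comm]
  conv_lhs => enter [2, l]; rw [Finset.sum_comm]
  rw [Finset.sum_comm]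

theorem ptraceRight_one_kronecker_mul_lift1_of_skew
    (hskew : ptrMid (up12 R * up23 Ψ) = flip13 N) (X : Matrix (Fin N) (Fin N) A) :
    ptraceRight ((1 ⊗ₖ Cmat Ψ).map (algebraMap ℂ A) * R.map (algebraMap ℂ A) * lift1 X) = X := by
  rw [← Matrix.map_mul, ptraceRight_mul_lift1, ptraceRight_map,
    ptraceRight_one_kronecker_mul_of_skew hskew, Matrix.map_one _ (map_zero _) (map_one _),
    one_mul]

theorem ptraceRight_one_kronecker_mul_lift1_mul_of_hecke (hq : q ≠ 0)
    (hYB : up12 R * up23 R * up12 R = up23 R * up12 R * up23 R)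
    (hHecke : (R - q • (1 : Matrix (Fin N × Fin N) (Fin N × Fin N) ℂ))
        * (R + q⁻¹ • (1 : Matrix (Fin N × Fin N) (Fin N × Fin N) ℂ)) = 0)
    (hskew : ptrMid (up12 R * up23 Ψ) = flip13 N) (X : Matrix (Fin N) (Fin N) A) :
    ptraceRight ((1 ⊗ₖ Cmat Ψ).map (algebraMap ℂ A) * R.map (algebraMap ℂ A) * lift1 X
        * R.map (algebraMap ℂ A)) = trR (Cmat Ψ) X • 1 + (q - q⁻¹) • X := by
  ext i j
  rw [← Matrix.map_mul, ptraceRight_map_mul_lift1_mul_map_apply,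
    ptraceKernel_eq_of_hecke hq hYB hHecke hskew]
  simp only [Matrix.add_apply, Matrix.smul_apply, smul_eq_mul, of_apply, one_apply, map_add,
    add_mul, Finset.sum_add_distrib, apply_ite (algebraMap ℂ A), map_zero, mul_ite, ite_mul,
    Prod.mk.injEq, ite_and, mul_one, mul_zero, zero_mul, Finset.sum_ite_eq', Finset.mem_univ,
    if_true, Finset.sum_ite_irrel, Finset.sum_const_zero]
  rw [add_comm, Algebra.smul_def, trR, Finset.sum_comm]

theorem commute_trR_apply_of_conj_mul_eq (hq : q ≠ 0)
    (hYB : up12 R * up23 R * up12 R = up23 R * up12 R * up23 R)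
    (hHecke : (R - q • (1 : Matrix (Fin N × Fin N) (Fin N × Fin N) ℂ))
        * (R + q⁻¹ • (1 : Matrix (Fin N × Fin N) (Fin N × Fin N) ℂ)) = 0)
    (hskew : ptrMid (up12 R * up23 Ψ) = flip13 N) {X Y : Matrix (Fin N) (Fin N) A}
    (h : (R.map (algebraMap ℂ A) - (q - q⁻¹) • 1) * lift1 X * R.map (algebraMap ℂ A) * lift1 Y
        = lift1 Y * R.map (algebraMap ℂ A) * lift1 X * (R.map (algebraMap ℂ A) - (q - q⁻¹) • 1))
    (i j : Fin N) : Commute (trR (Cmat Ψ) X) (Y i j) := by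
  set S := R.map (algebraMap ℂ A)
  set C₂ := (1 ⊗ₖ Cmat Ψ : Matrix (Fin N × Fin N) (Fin N × Fin N) ℂ).map (algebraMap ℂ A)
  have hC₂ : ∀ (Z : Matrix (Fin N) (Fin N) A) W, C₂ * (lift1 Z * W) = lift1 Z * (C₂ * W) :=
    fun Z W => by rw [← mul_assoc, ← mul_assoc, (commute_lift1_map_one_kronecker Z _).eq]
  have hS : ptraceRight (C₂ * S) = 1 := by
    simpa [lift1_one] using ptraceRight_one_kronecker_mul_lift1_of_skew hskew (1 : Matrix _ _ A)
  have hSX : ptraceRight (C₂ * S * lift1 X) = X :=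
    ptraceRight_one_kronecker_mul_lift1_of_skew hskew X
  have hSXS := ptraceRight_one_kronecker_mul_lift1_mul_of_hecke hq hYB hHecke hskew X
  have hleft : ptraceRight (C₂ * ((S - (q - q⁻¹) • 1) * lift1 X * S)) = trR (Cmat Ψ) X • 1 := by
    have : C₂ * ((S - (q - q⁻¹) • 1) * lift1 X * S)
        = C₂ * S * lift1 X * S - (q - q⁻¹) • (lift1 X * (C₂ * S)) := by
      simp only [sub_mul, mul_sub, smul_mul_assoc, mul_smul_comm, one_mul, mul_assoc, hC₂]
    rw [this, ptraceRight_sub, ptraceRight_smul, ptraceRight_lift1_mul, hS, hSXS, mul_one,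
      add_sub_cancel_right]
  have hright :
      ptraceRight (C₂ * (S * (lift1 X * (S - (q - q⁻¹) • 1)))) = trR (Cmat Ψ) X • 1 := by
    have : C₂ * (S * (lift1 X * (S - (q - q⁻¹) • 1)))
        = C₂ * S * lift1 X * S - (q - q⁻¹) • (C₂ * S * lift1 X) := by
      simp only [mul_sub, mul_smul_comm, mul_one, mul_assoc]
    rw [this, ptraceRight_sub, ptraceRight_smul, hSX, hSXS, add_sub_cancel_right]
  have key : (trR (Cmat Ψ) X • 1) * Y = Y * (trR (Cmat Ψ) X • 1) :=
    calc (trR (Cmat Ψ) X • 1) * Y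
        = ptraceRight (C₂ * ((S - (q - q⁻¹) • 1) * lift1 X * S * lift1 Y)) := by
          rw [← mul_assoc, ptraceRight_mul_lift1, hleft]
      _ = ptraceRight (C₂ * (lift1 Y * (S * (lift1 X * (S - (q - q⁻¹) • 1))))) := by
          rw [h]; simp only [mul_assoc]
      _ = Y * (trR (Cmat Ψ) X • 1) := by rw [hC₂, ptraceRight_lift1_mul, hright]
  simpa [Commute, SemiconjBy, mul_apply, one_apply] using congrFun₂ key i j

end AlgebraValued

theorem rtrace_powers_central_general (N : ℕ)
    (R Ψ : Matrix (Fin N × Fin N) (Fin N × Fin N) ℂ) (q : ℂ) (hq : q ≠ 0)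
    (hYB : up12 R * up23 R * up12 R = up23 R * up12 R * up23 R)
    (hHecke : (R - q • (1 : Matrix (Fin N × Fin N) (Fin N × Fin N) ℂ))
        * (R + q⁻¹ • (1 : Matrix (Fin N × Fin N) (Fin N × Fin N) ℂ)) = 0)
    (hskew : ptrMid (up12 R * up23 Ψ) = flip13 N ∧ ptrMid (up12 Ψ * up23 R) = flip13 N)
    (A : Type) [Ring A] [Algebra ℂ A] (L M : Matrix (Fin N) (Fin N) A)
    (hREM : R.map (algebraMap ℂ A) * lift1 M * R.map (algebraMap ℂ A) * lift1 M
        = lift1 M * R.map (algebraMap ℂ A) * lift1 M * R.map (algebraMap ℂ A))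
    (hOFP : R.map (algebraMap ℂ A) * lift1 L * R.map (algebraMap ℂ A) * lift1 M
        = lift1 M * R.map (algebraMap ℂ A) * lift1 L * R.map (algebraMap ℂ A)) :
    ∀ k : ℕ, 1 ≤ k → ∀ i j : Fin N,
      trR (Cmat Ψ) (M ^ k) * M i j = M i j * trR (Cmat Ψ) (M ^ k)
      ∧ trR (Cmat Ψ) (M ^ k) * L i j = L i j * trR (Cmat Ψ) (M ^ k) := by
  intro k _ i j
  set S := R.map (algebraMap ℂ A)
  have hHeckeA : (S - q • 1) * (S + q⁻¹ • 1) = 0 := by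
    have := congrArg (Algebra.ofId ℂ A).mapMatrix hHecke
    rwa [map_mul, map_sub, map_add, map_smul, map_smul, map_one, map_zero] at this
  have hcentral (Y : Matrix (Fin N) (Fin N) A)
      (hY : S * lift1 Y * S * lift1 M = lift1 M * S * lift1 Y * S) :
      Commute (trR (Cmat Ψ) (M ^ k)) (Y i j) := by
    refine commute_trR_apply_of_conj_mul_eq hq hYB hHecke hskew.1 ?_ i j
    rw [lift1_pow]
    exact conj_pow_mul_eq_of_reflection (mul_sub_eq_one_of_hecke hq hHeckeA)
      (sub_mul_eq_one_of_hecke hq hHeckeA) hY k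
  exact ⟨(hcentral M hREM).eq, (hcentral L hOFP).eq⟩

/-- In the adjoint braided differential algebra, the R-traces `Tr_R(M^k)` are
central: they commute with every entry of `M` and every entry of `L`. -/
theorem rtrace_powers_central (N : ℕ) (hN : 1 ≤ N)
    (R Rinv Ψ : Matrix (Fin N × Fin N) (Fin N × Fin N) ℂ) (q : ℂ) (hq : q ≠ 0)
    (hYB : up12 R * up23 R * up12 R = up23 R * up12 R * up23 R)
    (hRinv : R * Rinv = 1 ∧ Rinv * R = 1)
    (hHecke : (R - q • (1 : Matrix (Fin N × Fin N) (Fin N × Fin N) ℂ))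
        * (R + q⁻¹ • (1 : Matrix (Fin N × Fin N) (Fin N × Fin N) ℂ)) = 0)
    (hskew : ptrMid (up12 R * up23 Ψ) = flip13 N ∧ ptrMid (up12 Ψ * up23 R) = flip13 N)
    (A : Type) [Ring A] [Algebra ℂ A] (L M : Matrix (Fin N) (Fin N) A)
    (hREM : R.map (algebraMap ℂ A) * lift1 M * R.map (algebraMap ℂ A) * lift1 M
        = lift1 M * R.map (algebraMap ℂ A) * lift1 M * R.map (algebraMap ℂ A))
    (hREL : R.map (algebraMap ℂ A) * lift1 L * R.map (algebraMap ℂ A) * lift1 L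
        = lift1 L * R.map (algebraMap ℂ A) * lift1 L * R.map (algebraMap ℂ A))
    (hOFP : R.map (algebraMap ℂ A) * lift1 L * R.map (algebraMap ℂ A) * lift1 M
        = lift1 M * R.map (algebraMap ℂ A) * lift1 L * R.map (algebraMap ℂ A)) :
    ∀ k : ℕ, 1 ≤ k → ∀ i j : Fin N,
      trR (Cmat Ψ) (M ^ k) * M i j = M i j * trR (Cmat Ψ) (M ^ k)
      ∧ trR (Cmat Ψ) (M ^ k) * L i j = L i j * trR (Cmat Ψ) (M ^ k) :=
  rtrace_powers_central_general N R Ψ q hq hYB hHecke hskew A L M hREM hOFP
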